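/- Let 0 ≤ v < 1, L > 0 and let φ : ℝ² → ℂ be defined by φ(x,t) = Σ_{n∈ℤ} a_n·(exp(((1-v)/L)·ω_n·(t+x)) + exp(((1+v)/L)·ω_n·(t-x))) with ω_n = (2n+1)iπ/2 (the case η = 0, so γ_η = 1), under the summability condition Σ|a_n| < ∞. Then with T_v = 2L/(1-v²) one has φ(x + v·T_v, t + T_v) = -φ(x,t) for all x, t. -/
import Mathlib


open Complex

theorem anti_periodicity (v L : ℝ) (hv0 : 0 ≤ v) (hv1 : v < 1) (hL : 0 < L)
    (a : ℤ → ℂ) (ha : Summable fun n => ‖a n‖) :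
    ∀ x t : ℝ,
      (∑' n : ℤ, a n *
        (Complex.exp (((1 - v) / L : ℝ) * ((2 * (n : ℂ) + 1) * Complex.I * Real.pi / 2)
            * ((t + 2 * L / (1 - v ^ 2) : ℝ) + (x + v * (2 * L / (1 - v ^ 2)) : ℝ)))
         + Complex.exp (((1 + v) / L : ℝ) * ((2 * (n : ℂ) + 1) * Complex.I * Real.pi / 2)
            * ((t + 2 * L / (1 - v ^ 2) : ℝ) - (x + v * (2 * L / (1 - v ^ 2)) : ℝ)))))
      = -(∑' n : ℤ, a n *
        (Complex.exp (((1 - v) / L : ℝ) * ((2 * (n : ℂ) + 1) * Complex.I * Real.pi / 2)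
            * ((t : ℂ) + (x : ℂ)))
         + Complex.exp (((1 + v) / L : ℝ) * ((2 * (n : ℂ) + 1) * Complex.I * Real.pi / 2)
            * ((t : ℂ) - (x : ℂ))))) := by
  intro x t
  have hL' : (L : ℂ) ≠ 0 := by exact_mod_cast hL.ne'
  have hv2 : (1 : ℂ) - (v : ℂ) ^ 2 ≠ 0 := by
    have : (1 : ℝ) - v ^ 2 ≠ 0 := by nlinarith
    exact_mod_cast this
  have key : ∀ n : ℤ, Complex.exp ((2 * (n : ℂ) + 1) * Real.pi * Complex.I) = -1 := by
    intro n
    rw [show (2 * (n : ℂ) + 1) * Real.pi * Complex.I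
        = (n : ℂ) * (2 * Real.pi * Complex.I) + Real.pi * Complex.I by ring,
      Complex.exp_add, Complex.exp_int_mul_two_pi_mul_I, Complex.exp_pi_mul_I]
    ring
  have hterm : ∀ n : ℤ, a n *
        (Complex.exp (((1 - v) / L : ℝ) * ((2 * (n : ℂ) + 1) * Complex.I * Real.pi / 2)
            * ((t + 2 * L / (1 - v ^ 2) : ℝ) + (x + v * (2 * L / (1 - v ^ 2)) : ℝ)))
         + Complex.exp (((1 + v) / L : ℝ) * ((2 * (n : ℂ) + 1) * Complex.I * Real.pi / 2)
            * ((t + 2 * L / (1 - v ^ 2) : ℝ) - (x + v * (2 * L / (1 - v ^ 2)) : ℝ))))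
      = -(a n *
        (Complex.exp (((1 - v) / L : ℝ) * ((2 * (n : ℂ) + 1) * Complex.I * Real.pi / 2)
            * ((t : ℂ) + (x : ℂ)))
         + Complex.exp (((1 + v) / L : ℝ) * ((2 * (n : ℂ) + 1) * Complex.I * Real.pi / 2)
            * ((t : ℂ) - (x : ℂ))))) := by
    intro n
    have hA : (((1 - v) / L : ℝ) : ℂ) * ((2 * (n : ℂ) + 1) * Complex.I * Real.pi / 2)
        * (((t + 2 * L / (1 - v ^ 2) : ℝ) : ℂ) + ((x + v * (2 * L / (1 - v ^ 2)) : ℝ) : ℂ))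
        = ((1 - v) / L : ℝ) * ((2 * (n : ℂ) + 1) * Complex.I * Real.pi / 2)
            * ((t : ℂ) + (x : ℂ)) + (2 * (n : ℂ) + 1) * Real.pi * Complex.I := by
      push_cast
      field_simp
      ring
    have hB : (((1 + v) / L : ℝ) : ℂ) * ((2 * (n : ℂ) + 1) * Complex.I * Real.pi / 2)
        * (((t + 2 * L / (1 - v ^ 2) : ℝ) : ℂ) - ((x + v * (2 * L / (1 - v ^ 2)) : ℝ) : ℂ))
        = ((1 + v) / L : ℝ) * ((2 * (n : ℂ) + 1) * Complex.I * Real.pi / 2)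
            * ((t : ℂ) - (x : ℂ)) + (2 * (n : ℂ) + 1) * Real.pi * Complex.I := by
      push_cast
      field_simp
      ring
    rw [hA, hB, Complex.exp_add, Complex.exp_add, key n]
    ring
  calc (∑' n : ℤ, a n *
        (Complex.exp (((1 - v) / L : ℝ) * ((2 * (n : ℂ) + 1) * Complex.I * Real.pi / 2)
            * ((t + 2 * L / (1 - v ^ 2) : ℝ) + (x + v * (2 * L / (1 - v ^ 2)) : ℝ)))
         + Complex.exp (((1 + v) / L : ℝ) * ((2 * (n : ℂ) + 1) * Complex.I * Real.pi / 2)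
            * ((t + 2 * L / (1 - v ^ 2) : ℝ) - (x + v * (2 * L / (1 - v ^ 2)) : ℝ)))))
      = ∑' n : ℤ, -(a n *
        (Complex.exp (((1 - v) / L : ℝ) * ((2 * (n : ℂ) + 1) * Complex.I * Real.pi / 2)
            * ((t : ℂ) + (x : ℂ)))
         + Complex.exp (((1 + v) / L : ℝ) * ((2 * (n : ℂ) + 1) * Complex.I * Real.pi / 2)
            * ((t : ℂ) - (x : ℂ))))) := tsum_congr hterm
    _ = _ := tsum_neg
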